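/- Let a, b ∈ ℂ and let w₁, w₂, w₃, w₄ be nonzero complex numbers with |e_a·w₁/w₄| < 1, |e_b·w₃/w₄| < 1, |w₂w₄/(w₁w₃)| < 1, |e_a·w₂/w₃| < 1, |e_b·w₂/w₁| < 1, and such that w₁w₃/(w₂w₄) and w₄/w₁ are not nonpositive reals, where e_a = e^{πia}, e_b = e^{πib}. Define Φ⁻ on a neighborhood of w₁ by Φ⁻(z) = −(πi(a+b)/2)·Log(z·w₃/(w₂w₄)) + Log(w₃/w₄)·Log(w₄/z) − Li₂(e_a·z/w₄) − Li₂(e_b·w₃/w₄) − Li₂(w₂w₄/(z·w₃)) + Li₂(e_a·w₂/w₃) + Li₂(e_b·w₂/z) + π²/6. Then Φ⁻ has a complex derivative D at w₁, and exp(w₁·D) = e^{πi(−a+b)/2}·(1 − e_a·w₁/w₄)·(1 − e_b^{−1}·w₁/w₂)·(1 − w₁w₃/(w₂w₄))^{−1} (the inverted factor is nonzero since |w₁w₃/(w₂w₄)| > 1). -/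

import Mathlib

/-!
Every term of `Φ⁻` is a function of a monomial `c z` or `c / z`, so its Euler derivative
`z ∂/∂z` is elementary: `±1` for `log (c z^{±1})`, and `∓ log (1 - c z^{±1})` for
`Li₂ (c z^{±1})`, because `z Li₂'(z) = -log (1 - z)`. Hence `w₁ ∂Φ⁻/∂w₁` is a sum of logarithms,
and its exponential is a product of the factors `1 - c w₁^{±1}`.
-/

open Complex Real

noncomputable def Li2 (z : ℂ) : ℂ := ∑' n : ℕ, z ^ (n + 1) / ((n : ℂ) + 1) ^ 2

theorem hasDerivAt_Li2_tsum {z : ℂ} (hz : ‖z‖ < 1) :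
    HasDerivAt Li2 (∑' n : ℕ, z ^ n / ((n : ℂ) + 1)) z := by
  obtain ⟨r, hzr, hr1⟩ := exists_between hz
  have hr0 : 0 < r := (norm_nonneg z).trans_lt hzr
  refine hasDerivAt_tsum_of_isPreconnected (𝕜 := ℂ)
    (g := fun (n : ℕ) y => y ^ (n + 1) / ((n : ℂ) + 1) ^ 2)
    (g' := fun (n : ℕ) y => y ^ n / ((n : ℂ) + 1)) (summable_geometric_of_lt_one hr0.le hr1)
    Metric.isOpen_ball (convex_ball 0 r).isPreconnected (fun n y _ => ?_) (fun n y hy => ?_)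
    (Metric.mem_ball_self hr0) ?_ (mem_ball_zero_iff.mpr hzr)
  · refine ((hasDerivAt_pow (n + 1) y).div_const (((n : ℂ) + 1) ^ 2)).congr_deriv ?_
    push_cast [Nat.add_sub_cancel]
    field_simp
  · have hn : (1 : ℝ) ≤ ‖(n : ℂ) + 1‖ := by exact_mod_cast (by simp : (1:ℝ) ≤ n + 1)
    rw [norm_div, norm_pow]
    calc ‖y‖ ^ n / ‖(n : ℂ) + 1‖ ≤ ‖y‖ ^ n := div_le_self (by positivity) hn
      _ ≤ r ^ n := pow_le_pow_left₀ (norm_nonneg y) (mem_ball_zero_iff.mp hy).le n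
  · simp [summable_zero]

theorem mul_tsum_pow_div_succ {z : ℂ} (hz : ‖z‖ < 1) :
    z * ∑' n : ℕ, z ^ n / ((n : ℂ) + 1) = -log (1 - z) := by
  rw [← tsum_mul_left, ← (hasSum_taylorSeries_neg_log' hz).tsum_eq]
  congr 1 with n
  ring

theorem hasDerivAt_Li2 {z : ℂ} (hz : ‖z‖ < 1) (hz0 : z ≠ 0) :
    HasDerivAt Li2 (-log (1 - z) / z) z := by
  rw [← mul_tsum_pow_div_succ hz, mul_div_cancel_left₀ _ hz0]
  exact hasDerivAt_Li2_tsum hz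

theorem hasDerivAt_Li2_const_mul {c z : ℂ} (h : ‖c * z‖ < 1) (hc : c ≠ 0) (hz : z ≠ 0) :
    HasDerivAt (fun y => Li2 (c * y)) (-log (1 - c * z) / z) z := by
  refine ((hasDerivAt_Li2 h (mul_ne_zero hc hz)).comp z
    ((hasDerivAt_id' z).const_mul c)).congr_deriv ?_
  field_simp

theorem hasDerivAt_Li2_const_div {c z : ℂ} (h : ‖c / z‖ < 1) (hc : c ≠ 0) (hz : z ≠ 0) :
    HasDerivAt (fun y => Li2 (c / y)) (log (1 - c / z) / z) z := by
  refine ((hasDerivAt_Li2 h (div_ne_zero hc hz)).comp z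
    ((hasDerivAt_const z c).fun_div (hasDerivAt_id' z) hz)).congr_deriv ?_
  field_simp
  ring

theorem hasDerivAt_log_const_mul {c z : ℂ} (h : c * z ∈ slitPlane) :
    HasDerivAt (fun y => log (c * y)) (1 / z) z := by
  have hcz := mul_ne_zero_iff.mp (slitPlane_ne_zero h)
  convert ((hasDerivAt_id' z).const_mul c).clog h using 1
  field_simp [hcz.1]

theorem hasDerivAt_log_const_div {c z : ℂ} (h : c / z ∈ slitPlane) :
    HasDerivAt (fun y => log (c / y)) (-1 / z) z := by
  have hcz := div_ne_zero_iff.mp (slitPlane_ne_zero h)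
  convert ((hasDerivAt_const z c).fun_div (hasDerivAt_id' z) hcz.2).clog h using 1
  field_simp [hcz.1]
  ring

theorem one_sub_ne_zero_of_norm_lt_one {R : Type*} [NormedRing R] [NormOneClass R] {x : R}
    (hx : ‖x‖ < 1) : 1 - x ≠ 0 := by
  rw [sub_ne_zero]; rintro rfl; simp at hx

theorem mem_slitPlane_of_not_nonpos {z : ℂ} (h : ¬ (z.im = 0 ∧ z.re ≤ 0)) : z ∈ slitPlane := by
  rw [mem_slitPlane_iff]
  by_contra! h'
  exact h ⟨h'.2, h'.1⟩

theorem negative_crossing_region_deriv_general (a b : ℂ) (w₁ w₂ w₃ w₄ : ℂ)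
    (h₁ : w₁ ≠ 0) (h₂ : w₂ ≠ 0) (h₃ : w₃ ≠ 0) (h₄ : w₄ ≠ 0)
    (ea eb : ℂ)
    (hea : ea = Complex.exp ((Real.pi : ℂ) * Complex.I * a))
    (heb : eb = Complex.exp ((Real.pi : ℂ) * Complex.I * b))
    (ha1 : ‖ea * w₁ / w₄‖ < 1)
    (hw : ‖w₂ * w₄ / (w₁ * w₃)‖ < 1)
    (hb2 : ‖eb * w₂ / w₁‖ < 1)
    (hslit1 : ¬ ((w₁ * w₃ / (w₂ * w₄)).im = 0 ∧ (w₁ * w₃ / (w₂ * w₄)).re ≤ 0))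
    (hslit2 : ¬ ((w₄ / w₁).im = 0 ∧ (w₄ / w₁).re ≤ 0)) :
    ∃ D : ℂ,
      HasDerivAt (fun z : ℂ =>
          -(((Real.pi : ℂ) * Complex.I * (a + b) / 2)) * Complex.log (z * w₃ / (w₂ * w₄))
            + Complex.log (w₃ / w₄) * Complex.log (w₄ / z)
            - Li2 (ea * z / w₄) - Li2 (eb * w₃ / w₄)
            - Li2 (w₂ * w₄ / (z * w₃)) + Li2 (ea * w₂ / w₃) + Li2 (eb * w₂ / z)
            + (Real.pi : ℂ) ^ 2 / 6) D w₁ ∧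
      Complex.exp (w₁ * D)
        = Complex.exp ((Real.pi : ℂ) * Complex.I * (-a + b) / 2)
            * (1 - ea * w₁ / w₄) * (1 - eb⁻¹ * w₁ / w₂)
            * (1 - w₁ * w₃ / (w₂ * w₄))⁻¹ := by
  have hea0 : ea ≠ 0 := hea ▸ exp_ne_zero _
  have heb0 : eb ≠ 0 := heb ▸ exp_ne_zero _
  set c := -((π : ℂ) * I * (a + b) / 2) with hc
  have hslit₁ : w₃ / (w₂ * w₄) * w₁ ∈ slitPlane := by
    convert mem_slitPlane_of_not_nonpos hslit1 using 1; ring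
  have hp₁ : ‖ea / w₄ * w₁‖ < 1 := by convert ha1 using 2; ring
  have hp₂ : ‖w₂ * w₄ / w₃ / w₁‖ < 1 := by convert hw using 2; ring
  have hlog₁ := (hasDerivAt_log_const_mul hslit₁).const_mul c
  have hlog₂ := (hasDerivAt_log_const_div (mem_slitPlane_of_not_nonpos hslit2)).const_mul
    (log (w₃ / w₄))
  have hLi₁ := hasDerivAt_Li2_const_mul hp₁ (div_ne_zero hea0 h₄) h₁
  have hLi₂ := hasDerivAt_Li2_const_div hp₂ (div_ne_zero (mul_ne_zero h₂ h₄) h₃) h₁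
  have hLi₃ := hasDerivAt_Li2_const_div hb2 (mul_ne_zero heb0 h₂) h₁
  have hΦ := ((((((hlog₁.fun_add hlog₂).fun_sub hLi₁).sub_const (Li2 (eb * w₃ / w₄))).fun_sub
    hLi₂).add_const (Li2 (ea * w₂ / w₃))).fun_add hLi₃).add_const ((π : ℂ) ^ 2 / 6)
  refine ⟨(c - log (w₃ / w₄) + log (1 - ea * w₁ / w₄) - log (1 - w₂ * w₄ / (w₁ * w₃))
    + log (1 - eb * w₂ / w₁)) / w₁, ?_, ?_⟩
  · refine (hΦ.congr_deriv (by ring_nf)).congr_of_eventuallyEq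
      (Filter.Eventually.of_forall fun z => ?_)
    ring_nf
  rw [mul_div_cancel₀ _ h₁]
  have hsplit : exp ((π : ℂ) * I * (-a + b) / 2) = exp c * eb := by
    rw [heb, ← Complex.exp_add, hc]; ring_nf
  rw [hsplit, Complex.exp_add, Complex.exp_sub, Complex.exp_add, Complex.exp_sub,
    exp_log (div_ne_zero h₃ h₄),
    exp_log (one_sub_ne_zero_of_norm_lt_one ha1), exp_log (one_sub_ne_zero_of_norm_lt_one hw),
    exp_log (one_sub_ne_zero_of_norm_lt_one hb2)]
  -- `1 - x = -x (1 - x⁻¹)` turns `(1 - eb w₂/w₁) / (1 - w₂w₄/(w₁w₃))` into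
  -- `eb w₃/w₄ · (1 - eb⁻¹ w₁/w₂) (1 - w₁w₃/(w₂w₄))⁻¹`.
  field_simp
  rw [← neg_div_neg_eq]
  ring

/-- The derivative of the negative-crossing potential function `Φ⁻_c` with respect to the
region parameter `w₁`:  `exp (w₁ ∂Φ⁻/∂w₁)
  = e^{πi(-a+b)/2} (1 - e_a w₁/w₄)(1 - e_b⁻¹ w₁/w₂)(1 - w₁w₃/(w₂w₄))⁻¹`. -/
theorem negative_crossing_region_deriv (a b : ℂ) (w₁ w₂ w₃ w₄ : ℂ)
    (h₁ : w₁ ≠ 0) (h₂ : w₂ ≠ 0) (h₃ : w₃ ≠ 0) (h₄ : w₄ ≠ 0)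
    (ea eb : ℂ)
    (hea : ea = Complex.exp ((Real.pi : ℂ) * Complex.I * a))
    (heb : eb = Complex.exp ((Real.pi : ℂ) * Complex.I * b))
    (ha1 : ‖ea * w₁ / w₄‖ < 1)
    (hb1 : ‖eb * w₃ / w₄‖ < 1)
    (hw : ‖w₂ * w₄ / (w₁ * w₃)‖ < 1)
    (ha2 : ‖ea * w₂ / w₃‖ < 1)
    (hb2 : ‖eb * w₂ / w₁‖ < 1)
    (hslit1 : ¬ ((w₁ * w₃ / (w₂ * w₄)).im = 0 ∧ (w₁ * w₃ / (w₂ * w₄)).re ≤ 0))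
    (hslit2 : ¬ ((w₄ / w₁).im = 0 ∧ (w₄ / w₁).re ≤ 0)) :
    ∃ D : ℂ,
      HasDerivAt (fun z : ℂ =>
          -(((Real.pi : ℂ) * Complex.I * (a + b) / 2)) * Complex.log (z * w₃ / (w₂ * w₄))
            + Complex.log (w₃ / w₄) * Complex.log (w₄ / z)
            - Li2 (ea * z / w₄) - Li2 (eb * w₃ / w₄)
            - Li2 (w₂ * w₄ / (z * w₃)) + Li2 (ea * w₂ / w₃) + Li2 (eb * w₂ / z)
            + (Real.pi : ℂ) ^ 2 / 6) D w₁ ∧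
      Complex.exp (w₁ * D)
        = Complex.exp ((Real.pi : ℂ) * Complex.I * (-a + b) / 2)
            * (1 - ea * w₁ / w₄) * (1 - eb⁻¹ * w₁ / w₂)
            * (1 - w₁ * w₃ / (w₂ * w₄))⁻¹ :=
  negative_crossing_region_deriv_general a b w₁ w₂ w₃ w₄ h₁ h₂ h₃ h₄ ea eb hea heb ha1 hw hb2 hslit1
    hslit2
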